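/- For d ≥ 17, any partition of 𝔽₂^d \ {0} into parts P₁,…,P_d such that transversals are linearly independent over 𝔽₂ has covering number maxᵢ|Pᵢ| ≥ (2^d−1)/8 > 2·⌈(2^d−1)/d⌉. -/

import Mathlib

/-!
If `x` and `y` lie in different parts, then `x + y` lies in the part of `x` or in that of `y`:
otherwise `{x, y, x + y}` would be a linearly dependent transversal. Hence every ordered pair
`(x, y)` of nonzero vectors is `(a, b)`, `(a, b - a)` or `(b - a, a)` for some pair `(a, b)` lying
in a common part, so `(2^d - 1)^2 ≤ 3 ∑ |Pᵢ|^2 ≤ 3 M (2^d - 1)` with `M = maxᵢ |Pᵢ|`, i.e.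
`M ≥ (2^d - 1) / 3`. The comparison with `⌈(2^d - 1) / d⌉` is arithmetic.
-/

open Finset

open scoped Classical in
/-- A partition-matroid reduction of the complete binary matroid `B_d` on `𝔽₂^d`:
pairwise disjoint parts `P i ⊆ 𝔽₂^d` such that every transversal (a set picking at
most one element from each part) is linearly independent over `𝔽₂`. -/
def TransversalIndep {d : ℕ} (P : Fin d → Finset (Fin d → ZMod 2)) : Prop :=
  Pairwise (fun i j => Disjoint (P i) (P j)) ∧
  ∀ S : Finset (Fin d → ZMod 2),
    (∀ x ∈ S, ∃ i, x ∈ P i) → (∀ i, (S ∩ P i).card ≤ 1) →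
    LinearIndependent (ZMod 2) (fun x : {x : Fin d → ZMod 2 // x ∈ S} => (x : Fin d → ZMod 2))

section LinearAlgebra
variable {K V : Type*} [DivisionRing K] [AddCommGroup V] [Module K V]

theorem LinearIndepOn.add_mem_pair {x y : V}
    (h : LinearIndepOn K id (insert (x + y) {x, y} : Set V)) : x + y ∈ ({x, y} : Set V) :=
  (linearIndepOn_id_insert_iff.mp h).2 <|
    add_mem (Submodule.subset_span (by simp)) (Submodule.subset_span (by simp))

end LinearAlgebra

theorem card_sq_le_three_mul_card {V : Type*} [AddCommGroup V] [DecidableEq V] {Ω : Finset V}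
    {S : Finset (V × V)}
    (h : ∀ x ∈ Ω, ∀ y ∈ Ω, (x, y) ∈ S ∨ (x, x + y) ∈ S ∨ (y, x + y) ∈ S) :
    #Ω ^ 2 ≤ 3 * #S := by
  have hsub : Ω ×ˢ Ω ⊆
      S ∪ S.image (fun p => (p.1, p.2 - p.1)) ∪ S.image (fun p => (p.2 - p.1, p.1)) := by
    rintro ⟨x, y⟩ hxy
    rw [mem_product] at hxy
    rcases h x hxy.1 y hxy.2 with hS | hS | hS
    · exact mem_union_left _ (mem_union_left _ hS)
    · exact mem_union_left _ (mem_union_right _ (mem_image.mpr ⟨_, hS, by simp⟩))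
    · exact mem_union_right _ (mem_image.mpr ⟨_, hS, by simp⟩)
  calc #Ω ^ 2 = #(Ω ×ˢ Ω) := by rw [card_product, sq]
    _ ≤ _ := card_le_card hsub
    _ ≤ #S + #S + #S :=
      (card_union_le _ _).trans <|
        add_le_add ((card_union_le _ _).trans (add_le_add le_rfl card_image_le)) card_image_le
    _ = 3 * #S := by ring

section SamePartPairs
variable {α ι : Type*} [DecidableEq α] [Fintype ι]

def samePartPairs (P : ι → Finset α) : Finset (α × α) :=
  univ.biUnion fun i => P i ×ˢ P i

theorem mem_samePartPairs {P : ι → Finset α} {x y : α} :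
    (x, y) ∈ samePartPairs P ↔ ∃ i, x ∈ P i ∧ y ∈ P i := by
  simp [samePartPairs]

theorem card_samePartPairs_le (P : ι → Finset α) :
    #(samePartPairs P) ≤ (univ.sup fun i => #(P i)) * ∑ i, #(P i) :=
  calc #(samePartPairs P) ≤ ∑ i, #(P i ×ˢ P i) := card_biUnion_le
    _ = ∑ i, #(P i) * #(P i) := by simp only [card_product]
    _ ≤ ∑ i, (univ.sup fun i => #(P i)) * #(P i) :=
        sum_le_sum fun i _ => Nat.mul_le_mul_right _ (le_sup (f := fun i => #(P i)) (mem_univ i))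
    _ = _ := (mul_sum ..).symm

end SamePartPairs

namespace TransversalIndep
variable {d : ℕ} {P : Fin d → Finset (Fin d → ZMod 2)}

theorem eq_of_mem_of_mem (h : TransversalIndep P) {x : Fin d → ZMod 2} {i j : Fin d}
    (hi : x ∈ P i) (hj : x ∈ P j) : i = j :=
  by_contra fun hij => Finset.disjoint_left.mp (h.1 hij) hi hj

theorem add_mem_left_or_right (h : TransversalIndep P) {x y : Fin d → ZMod 2} {i j k : Fin d}
    (hx : x ∈ P i) (hy : y ∈ P j) (hxy : x + y ∈ P k) (hij : i ≠ j) : k = i ∨ k = j := by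
  by_contra! hk
  obtain ⟨hki, hkj⟩ := hk
  have hcover : ∀ z ∈ ({x + y, x, y} : Finset _), ∃ l, z ∈ P l := by
    simp only [mem_insert, mem_singleton, forall_eq_or_imp, forall_eq]
    exact ⟨⟨k, hxy⟩, ⟨i, hx⟩, ⟨j, hy⟩⟩
  have hcard : ∀ l, (({x + y, x, y} : Finset _) ∩ P l).card ≤ 1 := by
    intro l
    refine card_le_one.mpr fun a ha b hb => ?_
    simp only [mem_inter, mem_insert, mem_singleton] at ha hb
    have hl : ∀ {z m}, z ∈ P m → z ∈ P l → m = l := h.eq_of_mem_of_mem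
    rcases ha with ⟨rfl | rfl | rfl, ha⟩ <;> rcases hb with ⟨rfl | rfl | rfl, hb⟩ <;> grind
  have hli : LinearIndepOn (ZMod 2) id (({x + y, x, y} : Finset _) : Set (Fin d → ZMod 2)) :=
    h.2 _ hcover hcard
  rw [coe_insert, coe_pair] at hli
  rcases hli.add_mem_pair with hxy' | hxy'
  · exact hki (h.eq_of_mem_of_mem (hxy' ▸ hxy) hx)
  · exact hkj (h.eq_of_mem_of_mem (hxy' ▸ hxy) hy)

theorem mem_samePartPairs_or (h : TransversalIndep P) (hcover : ∀ x, x ≠ 0 ↔ ∃ i, x ∈ P i)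
    {x y : Fin d → ZMod 2} (hx : x ≠ 0) (hy : y ≠ 0) :
    (x, y) ∈ samePartPairs P ∨ (x, x + y) ∈ samePartPairs P ∨ (y, x + y) ∈ samePartPairs P := by
  simp only [mem_samePartPairs]
  obtain ⟨i, hxi⟩ := (hcover x).1 hx
  obtain ⟨j, hyj⟩ := (hcover y).1 hy
  by_cases hij : i = j
  · exact Or.inl ⟨j, hij ▸ hxi, hyj⟩
  have hxy : x + y ≠ 0 := by
    rw [← ZModModule.sub_eq_add, sub_ne_zero]
    rintro rfl
    exact hij (h.eq_of_mem_of_mem hxi hyj)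
  obtain ⟨k, hk⟩ := (hcover _).1 hxy
  rcases h.add_mem_left_or_right hxi hyj hk hij with rfl | rfl
  · exact Or.inr (Or.inl ⟨k, hxi, hk⟩)
  · exact Or.inr (Or.inr ⟨k, hyj, hk⟩)

theorem two_pow_sub_one_le_three_mul_sup (h : TransversalIndep P)
    (hcover : ∀ x, x ≠ 0 ↔ ∃ i, x ∈ P i) :
    2 ^ d - 1 ≤ 3 * univ.sup fun i => #(P i) := by
  set Ω := univ.erase (0 : Fin d → ZMod 2)
  set M := univ.sup fun i => #(P i)
  have hΩ : #Ω = 2 ^ d - 1 := by simp [Ω, card_erase_of_mem]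
  have hsum : ∑ i, #(P i) = #Ω := by
    have hunion : univ.biUnion P = Ω := by ext x; simp [Ω, hcover]
    rw [← hunion, card_biUnion fun i _ j _ hij => h.1 hij]
  have key : #Ω * #Ω ≤ 3 * M * #Ω :=
    calc #Ω * #Ω = #Ω ^ 2 := sq _ |>.symm
      _ ≤ 3 * #(samePartPairs P) := card_sq_le_three_mul_card fun x hx y hy =>
          h.mem_samePartPairs_or hcover (ne_of_mem_erase hx) (ne_of_mem_erase hy)
      _ ≤ 3 * (M * ∑ i, #(P i)) := Nat.mul_le_mul_left 3 (card_samePartPairs_le P)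
      _ = 3 * M * #Ω := by rw [hsum, mul_assoc]
  rw [← hΩ]
  rcases Nat.eq_zero_or_pos #Ω with hzero | hpos
  · simp [hzero]
  · exact Nat.le_of_mul_le_mul_right key hpos

end TransversalIndep

theorem two_mul_ceil_div_lt {d : ℕ} (hd : 17 ≤ d) :
    2 * (⌈((2 : ℝ) ^ d - 1) / d⌉₊ : ℝ) < ((2 : ℝ) ^ d - 1) / 8 := by
  set x : ℝ := (2 : ℝ) ^ d - 1
  have hx : (2 : ℝ) ^ 17 - 1 ≤ x := sub_le_sub_right (pow_le_pow_right₀ one_le_two hd) 1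
  have hdR : (17 : ℝ) ≤ d := by exact_mod_cast hd
  have hceil : (⌈x / d⌉₊ : ℝ) < x / d + 1 := Nat.ceil_lt_add_one (by positivity)
  have hdiv : x / d ≤ x / 17 := div_le_div_of_nonneg_left (by linarith) (by norm_num) hdR
  linarith

theorem stmt15 {d : ℕ} (hd : 17 ≤ d) (P : Fin d → Finset (Fin d → ZMod 2))
    (h : TransversalIndep P)
    (hcover : ∀ x : Fin d → ZMod 2, x ≠ 0 ↔ ∃ i, x ∈ P i) :
    ((Finset.univ.sup fun i => (P i).card : ℕ) : ℝ) ≥ ((2 : ℝ) ^ d - 1) / 8 ∧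
    ((2 : ℝ) ^ d - 1) / 8 > 2 * (⌈((2 : ℝ) ^ d - 1) / d⌉₊ : ℝ) := by
  refine ⟨?_, two_mul_ceil_div_lt hd⟩
  have hbound : ((2 ^ d - 1 : ℕ) : ℝ) ≤ 3 * (univ.sup fun i => #(P i) : ℕ) := by
    exact_mod_cast h.two_pow_sub_one_le_three_mul_sup hcover
  rw [Nat.cast_sub Nat.one_le_two_pow, Nat.cast_pow, Nat.cast_ofNat, Nat.cast_one] at hbound
  have hpos : (1 : ℝ) ≤ 2 ^ d := one_le_pow₀ one_le_two
  rw [ge_iff_le]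
  linarith
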